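/- arXiv:2603.17595 — 6 statements merged into one kernel-verified Lean document; each statement's English description precedes it below -/
import Mathlib

section
/- Let M be an n×n real symmetric matrix and let a, b, c be indices with b ≠ c. If there exists a permutation matrix P commuting with M such that P e_b = e_b and P e_a ≠ e_a, then there is no pretty good state transfer between e_a and the plus state (e_b+e_c)/√2; that is, there is no sequence of real numbers t_k and no γ ∈ ℂ with |γ| = 1 such that exp(i t_k M) e_a → γ (e_b + e_c)/√2 as k → ∞. -/
open Matrix Filter

/-- Transition matrix `U(t) = exp(itM)` of a real symmetric matrix `M`, acting on `ℂ^ι`. -/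
noncomputable def transU {ι : Type*} [Fintype ι] [DecidableEq ι]
    (M : Matrix ι ι ℝ) (t : ℝ) : Matrix ι ι ℂ :=
  NormedSpace.exp ((Complex.I * (t : ℂ)) • M.map Complex.ofReal)

/-- Transition matrix `exp(itM)` of a complex matrix `M`. -/
noncomputable def transUC {ι : Type*} [Fintype ι] [DecidableEq ι]
    (M : Matrix ι ι ℂ) (t : ℝ) : Matrix ι ι ℂ :=
  NormedSpace.exp ((Complex.I * (t : ℂ)) • M)

/-- Real standard basis vector `e_a`. -/
def eVecR {ι : Type*} [DecidableEq ι] (a : ι) : ι → ℝ := fun j => if j = a then 1 else 0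

/-- Complex standard basis vector `e_a`. -/
def eVec {ι : Type*} [DecidableEq ι] (a : ι) : ι → ℂ := fun j => if j = a then 1 else 0

/-- Coercion of a real vector to a complex vector. -/
def cVec {ι : Type*} (u : ι → ℝ) : ι → ℂ := fun j => (u j : ℂ)

/-- The plus state `(e_a + e_b)/√2`. -/
noncomputable def plusState {ι : Type*} [DecidableEq ι] (a b : ι) : ι → ℂ :=
  ((Real.sqrt 2 : ℂ))⁻¹ • (eVec a + eVec b)

/-- The pair state `(e_a − e_b)/√2`. -/
noncomputable def pairState {ι : Type*} [DecidableEq ι] (a b : ι) : ι → ℂ :=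
  ((Real.sqrt 2 : ℂ))⁻¹ • (eVec a - eVec b)

/-- Pretty good state transfer from `u` to `v` relative to `M`:
there are a sequence of times `t k` and a unimodular `γ` with `U(t k) u → γ v`. -/
def PGST {ι : Type*} [Fintype ι] [DecidableEq ι]
    (M : Matrix ι ι ℝ) (u v : ι → ℂ) : Prop :=
  ∃ (t : ℕ → ℝ) (γ : ℂ), ‖γ‖ = 1 ∧
    Tendsto (fun k => (transU M (t k)).mulVec u) atTop (nhds (γ • v))

/-- The permutation matrix of `σ`, satisfying `permMat σ *ᵥ e_a = e_{σ a}`. -/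
def permMat {ι : Type*} [DecidableEq ι] (σ : Equiv.Perm ι) : Matrix ι ι ℝ :=
  Matrix.of fun i j => if σ j = i then 1 else 0

/-- Adjacency matrix of the circulant graph `Cay(ℤ/n, S)`. -/
noncomputable def cayA (n : ℕ) (S : Finset (ZMod n)) : Matrix (ZMod n) (ZMod n) ℝ :=
  Matrix.of fun a b => if a - b ∈ S then 1 else 0

/-- Adjacency matrix of the cycle `C_n` on `ℤ/n`. -/
noncomputable def cycA (n : ℕ) : Matrix (ZMod n) (ZMod n) ℝ :=
  Matrix.of fun a b => if a - b = 1 ∨ b - a = 1 then 1 else 0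

/-- Adjacency matrix `J − I − A(C_n)` of the complement of the cycle `C_n`. -/
noncomputable def cycAbar (n : ℕ) : Matrix (ZMod n) (ZMod n) ℝ :=
  Matrix.of (fun _ _ => (1 : ℝ)) - 1 - cycA n

/-!
The permutation matrix `P` commutes with `M`, hence with every unitary `U(t)`, so the quantity
`⟨x, P x⟩` is the same for `x = e_a` and for every `x = U(t) e_a`; by continuity it is also the
same at the limit `γ v`, where the unimodular phase cancels. At `e_a` it is
`⟨e_a, e_{σ a}⟩ = 0`, whereas for `v = (e_b + e_c)/√2` we have `P v = (e_b + e_{σ c})/√2`, and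
the shared coordinate `e_b` makes `⟨v, P v⟩ ≥ 1/2`.
-/

section

variable {ι : Type*} [DecidableEq ι]

theorem eVecR_eq_single (a : ι) : eVecR a = Pi.single a 1 := by
  ext j; simp [eVecR, Pi.single_apply]

theorem eVec_eq_single (a : ι) : eVec a = Pi.single a 1 := by
  ext j; simp [eVec, Pi.single_apply]

theorem eVecR_injective : Function.Injective (eVecR : ι → ι → ℝ) :=
  fun a b h => by simpa [eVecR] using congrFun h a

variable [Fintype ι]

theorem permMat_mulVec_eVecR (σ : Equiv.Perm ι) (a : ι) :
    permMat σ *ᵥ eVecR a = eVecR (σ a) := by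
  ext i; simp [eVecR_eq_single, permMat, Pi.single_apply, eq_comm]

theorem permMat_map_mulVec_eVec (σ : Equiv.Perm ι) (a : ι) :
    (permMat σ).map Complex.ofReal *ᵥ eVec a = eVec (σ a) := by
  ext i; simp [eVec_eq_single, permMat, Pi.single_apply, eq_comm, apply_ite Complex.ofReal]

theorem permMat_map_mulVec_plusState (σ : Equiv.Perm ι) (a b : ι) :
    (permMat σ).map Complex.ofReal *ᵥ plusState a b = plusState (σ a) (σ b) := by
  rw [plusState, plusState, mulVec_smul, mulVec_add, permMat_map_mulVec_eVec,
    permMat_map_mulVec_eVec]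

theorem star_eVec_dotProduct_eVec (a b : ι) :
    star (eVec a) ⬝ᵥ eVec b = if a = b then 1 else 0 := by
  simp [eVec_eq_single, Pi.single_apply, eq_comm]

theorem star_plusState_dotProduct_plusState_ne_zero (a b c : ι) :
    star (plusState a b) ⬝ᵥ plusState a c ≠ 0 := by
  have h2 : star ((Real.sqrt 2 : ℂ)⁻¹) * (Real.sqrt 2 : ℂ)⁻¹ = 1 / 2 := by
    rw [star_inv₀, Complex.star_def, Complex.conj_ofReal, ← mul_inv, ← Complex.ofReal_mul,
      Real.mul_self_sqrt zero_le_two]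
    norm_num
  rw [plusState, plusState, star_smul, smul_dotProduct, dotProduct_smul, smul_smul, h2]
  simp only [star_add, add_dotProduct, dotProduct_add, star_eVec_dotProduct_eVec, smul_eq_mul]
  split_ifs <;> norm_num

theorem transU_mem_unitary {M : Matrix ι ι ℝ} (hM : M.IsSymm) (t : ℝ) :
    transU M t ∈ unitary (Matrix ι ι ℂ) := by
  set A : Matrix ι ι ℂ := (Complex.I * t) • M.map Complex.ofReal
  have hA : Aᴴ = -A := by
    have hH : (M.map Complex.ofReal)ᴴ = M.map Complex.ofReal := by
      ext i j
      simp [hM.apply i j]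
    rw [conjTranspose_smul, hH, ← neg_smul, star_mul', Complex.star_def, Complex.conj_I,
      Complex.conj_ofReal, neg_mul]
  have hU : star (transU M t) = NormedSpace.exp (-A) := by
    rw [transU, star_eq_conjTranspose, ← Matrix.exp_conjTranspose, hA]
  rw [Unitary.mem_iff, hU, transU, ← Matrix.exp_add_of_commute _ _ (Commute.refl A).neg_left,
    ← Matrix.exp_add_of_commute _ _ (Commute.refl A).neg_right, neg_add_cancel, add_neg_cancel,
    NormedSpace.exp_zero]
  exact ⟨rfl, rfl⟩

theorem Commute.map_ofReal_transU {P M : Matrix ι ι ℝ} (h : Commute P M) (t : ℝ) :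
    Commute (P.map Complex.ofReal) (transU M t) :=
  ((h.map Complex.ofRealHom.mapMatrix).smul_right _).exp_right

theorem star_mulVec_dotProduct_mulVec_of_mem_unitary {U : Matrix ι ι ℂ}
    (hU : U ∈ unitary (Matrix ι ι ℂ)) (x y : ι → ℂ) :
    star (U *ᵥ x) ⬝ᵥ (U *ᵥ y) = star x ⬝ᵥ y := by
  rw [star_mulVec, dotProduct_mulVec, vecMul_vecMul, ← star_eq_conjTranspose,
    Unitary.star_mul_self_of_mem hU, vecMul_one]

theorem star_dotProduct_mulVec_eq_of_tendsto {W : ℕ → Matrix ι ι ℂ} {P : Matrix ι ι ℂ}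
    {u v : ι → ℂ} {γ : ℂ} (hW : ∀ k, W k ∈ unitary (Matrix ι ι ℂ)) (hPW : ∀ k, Commute P (W k))
    (hγ : ‖γ‖ = 1) (h : Tendsto (fun k => W k *ᵥ u) atTop (nhds (γ • v))) :
    star u ⬝ᵥ (P *ᵥ u) = star v ⬝ᵥ (P *ᵥ v) := by
  set f : (ι → ℂ) → ℂ := fun x => star x ⬝ᵥ (P *ᵥ x)
  have hf : Continuous f := by fun_prop
  have hconst : ∀ k, f (W k *ᵥ u) = f u := fun k => by
    simp only [f]
    rw [mulVec_mulVec, (hPW k).eq, ← mulVec_mulVec,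
      star_mulVec_dotProduct_mulVec_of_mem_unitary (hW k)]
  have hlim : f (γ • v) = f v := by
    simp only [f]
    rw [mulVec_smul, star_smul, smul_dotProduct, dotProduct_smul, smul_smul, Complex.star_def,
      Complex.conj_mul', hγ, Complex.ofReal_one, one_pow, one_smul]
  have hseq : Tendsto (fun k => f (W k *ᵥ u)) atTop (nhds (f (γ • v))) :=
    (hf.tendsto _).comp h
  simp only [hconst, hlim] at hseq
  exact tendsto_nhds_unique tendsto_const_nhds hseq

end

theorem no_pgst_vertex_to_plus_of_automorphism_general {n : ℕ}
    (M : Matrix (Fin n) (Fin n) ℝ) (hM : M.IsSymm)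
    (a b c : Fin n)
    (σ : Equiv.Perm (Fin n)) (hcomm : permMat σ * M = M * permMat σ)
    (hfixb : permMat σ *ᵥ eVecR b = eVecR b)
    (hmovea : permMat σ *ᵥ eVecR a ≠ eVecR a) :
    ¬ ∃ (t : ℕ → ℝ) (γ : ℂ), ‖γ‖ = 1 ∧
      Tendsto (fun k => (transU M (t k)).mulVec (eVec a)) atTop (nhds (γ • plusState b c)) := by
  rintro ⟨t, γ, hγ, htend⟩
  have hσb : σ b = b := eVecR_injective (by rw [← permMat_mulVec_eVecR, hfixb])
  have hσa : σ a ≠ a := fun h => hmovea (by rw [permMat_mulVec_eVecR, h])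
  have hinv := star_dotProduct_mulVec_eq_of_tendsto (P := (permMat σ).map Complex.ofReal)
    (fun k => transU_mem_unitary hM (t k)) (fun k => Commute.map_ofReal_transU hcomm (t k)) hγ htend
  rw [permMat_map_mulVec_eVec, star_eVec_dotProduct_eVec, if_neg hσa.symm,
    permMat_map_mulVec_plusState, hσb] at hinv
  exact star_plusState_dotProduct_plusState_ne_zero b c (σ c) hinv.symm

/-- an automorphism fixing `b` but not `a` forbids PGST between `e_a`
and the plus state `(e_b + e_c)/√2`. -/
theorem no_pgst_vertex_to_plus_of_automorphism {n : ℕ}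
    (M : Matrix (Fin n) (Fin n) ℝ) (hM : M.IsSymm)
    (a b c : Fin n) (hbc : b ≠ c)
    (σ : Equiv.Perm (Fin n)) (hcomm : permMat σ * M = M * permMat σ)
    (hfixb : permMat σ *ᵥ eVecR b = eVecR b)
    (hmovea : permMat σ *ᵥ eVecR a ≠ eVecR a) :
    ¬ ∃ (t : ℕ → ℝ) (γ : ℂ), ‖γ‖ = 1 ∧
      Tendsto (fun k => (transU M (t k)).mulVec (eVec a)) atTop (nhds (γ • plusState b c)) :=
  no_pgst_vertex_to_plus_of_automorphism_general M hM a b c σ hcomm hfixb hmovea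
end

section
/- Let M be an n×n real symmetric matrix such that the all-ones vector 𝟙 is an eigenvector of M, let δ ∈ {−1, 1} and ζ ∈ ℝ, and set M̄ = δJ + ζI − M, where J is the n×n all-ones matrix. If τ ∈ ℝ satisfies nτ ∈ 2πℤ, then exp(−iτM̄) = e^{−iτζ} exp(iτM). Consequently, if M exhibits fractional revival from u to v at time τ (i.e., exp(iτM)u = αu + βv with β ≠ 0), then M̄ exhibits fractional revival from u to v at time −τ. -/
/-!
Since `𝟙` is an eigenvector of the symmetric matrix `M`, the all-ones matrix `J` commutes with `M`,
so `exp(-iτM̄)` factors as `exp(-iτδJ) · e^{-iτζ} · exp(iτM)`. As `J/n` is idempotent,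
`exp(aJ) = I + (e^{an} - 1) J/n`, which is `I` because `δnτ ∈ 2πℤ`. Fractional revival then
transfers since the two transition matrices differ by a unimodular scalar.
-/

open Matrix Filter

namespace NormedSpace

theorem exp_smul_of_isIdempotentElem {𝕂 𝔸 : Type*} [RCLike 𝕂] [NormedRing 𝔸] [NormedAlgebra 𝕂 𝔸]
    [CompleteSpace 𝔸] {P : 𝔸} (hP : IsIdempotentElem P) (a : 𝕂) :
    exp (a • P) = 1 - P + exp a • P := by
  have hterm : ∀ k : ℕ, (k.factorial⁻¹ : 𝕂) • (a • P) ^ k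
      = (Pi.single 0 (1 - P) : ℕ → 𝔸) k + ((k.factorial⁻¹ : 𝕂) • a ^ k) • P := by
    rintro (_ | k)
    · simp
    · simp [smul_pow, hP.pow_succ_eq, smul_smul]
  have hsum : HasSum (fun k : ℕ => (k.factorial⁻¹ : 𝕂) • (a • P) ^ k) (1 - P + exp a • P) := by
    simp only [hterm]
    exact (hasSum_pi_single 0 (1 - P)).add ((exp_series_hasSum_exp' (𝕂 := 𝕂) a).smul_const P)
  exact (exp_series_hasSum_exp' (𝕂 := 𝕂) (a • P)).unique hsum

end NormedSpace

namespace Matrix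

variable {ι : Type*} [Fintype ι]

theorem ones_mul_ones {R : Type*} [NonAssocSemiring R] :
    (of fun _ _ => (1 : R) : Matrix ι ι R) * of (fun _ _ => 1) =
      (Fintype.card ι : R) • of fun _ _ => 1 := by
  ext
  simp [mul_apply]

theorem commute_ones_of_mulVec_ones {R : Type*} [CommSemiring R] {M : Matrix ι ι R}
    (hM : M.IsSymm) {μ : R} (h1 : M *ᵥ (fun _ => 1) = μ • fun _ => 1) :
    Commute (of fun _ _ => (1 : R)) M := by
  have hrow : ∀ i, ∑ k, M i k = μ := fun i => by simpa [mulVec, dotProduct] using congrFun h1 i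
  have hcol : ∀ j, ∑ k, M k j = μ := fun j => by simpa only [hM.apply j] using hrow j
  ext i j
  simp [mul_apply, hrow, hcol]

variable [DecidableEq ι]

theorem exp_smul_of_isIdempotentElem {𝕂 : Type*} [RCLike 𝕂] {P : Matrix ι ι 𝕂}
    (hP : IsIdempotentElem P) (a : 𝕂) :
    NormedSpace.exp (a • P) = 1 - P + NormedSpace.exp a • P := by
  open scoped Norms.Operator in exact NormedSpace.exp_smul_of_isIdempotentElem hP a

end Matrix

section transU

variable {ι : Type*} [Fintype ι] [DecidableEq ι]

theorem transU_add_of_commute {A B : Matrix ι ι ℝ} (h : Commute A B) (t : ℝ) :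
    transU (A + B) t = transU A t * transU B t := by
  have hC : Commute (A.map Complex.ofReal) (B.map Complex.ofReal) :=
    h.map Complex.ofRealHom.mapMatrix
  rw [transU, transU, transU, Matrix.map_add _ Complex.ofReal_add, smul_add,
    exp_add_of_commute _ _ ((hC.smul_left _).smul_right _)]

theorem transU_neg (A : Matrix ι ι ℝ) (t : ℝ) : transU (-A) t = transU A (-t) := by
  rw [transU, transU, Matrix.map_neg _ Complex.ofReal_neg, smul_neg, Complex.ofReal_neg, mul_neg,
    neg_smul]

theorem transU_smul_one (c t : ℝ) :
    transU (c • (1 : Matrix ι ι ℝ)) t = Complex.exp (Complex.I * t * c) • 1 := by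
  have hmap : (c • (1 : Matrix ι ι ℝ)).map Complex.ofReal = (c : ℂ) • 1 := by
    ext i j
    by_cases hij : i = j <;> simp [one_apply, hij]
  rw [transU, hmap, smul_smul, Matrix.exp_smul_of_isIdempotentElem
    (IsIdempotentElem.one : IsIdempotentElem (1 : Matrix ι ι ℂ)),
    ← Complex.exp_eq_exp_ℂ, sub_self, zero_add]

theorem transU_smul_ones [Nonempty ι] {c t : ℝ}
    (hct : ∃ k : ℤ, c * Fintype.card ι * t = 2 * Real.pi * k) :
    transU (c • of fun _ _ => 1 : Matrix ι ι ℝ) t = 1 := by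
  obtain ⟨k, hk⟩ := hct
  have hcard : (Fintype.card ι : ℂ) ≠ 0 := Nat.cast_ne_zero.mpr Fintype.card_ne_zero
  set P : Matrix ι ι ℂ := (Fintype.card ι : ℂ)⁻¹ • of fun _ _ => 1
  have hP : IsIdempotentElem P := by
    rw [IsIdempotentElem, smul_mul_smul, ones_mul_ones, smul_smul, inv_mul_cancel_right₀ hcard]
  have hmap : (Complex.I * t) • (c • of fun _ _ => 1 : Matrix ι ι ℝ).map Complex.ofReal =
      (Complex.I * t * c * Fintype.card ι) • P := by
    ext i j
    simp [P]
  have hexp : Complex.exp (Complex.I * t * c * Fintype.card ι) = 1 :=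
    Complex.exp_eq_one_iff.mpr ⟨k, by
      have hkC : (c * Fintype.card ι * t : ℂ) = 2 * Real.pi * k := by exact_mod_cast hk
      linear_combination Complex.I * hkC⟩
  rw [transU, hmap, Matrix.exp_smul_of_isIdempotentElem hP, ← Complex.exp_eq_exp_ℂ, hexp, one_smul,
    sub_add_cancel]

theorem transU_complement [Nonempty ι] {M : Matrix ι ι ℝ} (hM : M.IsSymm) {μ : ℝ}
    (h1 : M *ᵥ (fun _ => 1) = μ • fun _ => 1) {δ τ : ℝ}
    (hδτ : ∃ k : ℤ, δ * Fintype.card ι * τ = 2 * Real.pi * k) (ζ : ℝ) :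
    transU (δ • of (fun _ _ => 1) + ζ • 1 - M) (-τ) =
      Complex.exp (-(Complex.I * τ * ζ)) • transU M τ := by
  have hJM := commute_ones_of_mulVec_ones hM h1
  have hδτ' : ∃ k : ℤ, δ * Fintype.card ι * -τ = 2 * Real.pi * k := by
    obtain ⟨k, hk⟩ := hδτ
    exact ⟨-k, by push_cast; linarith⟩
  have hJ : Commute (δ • of fun _ _ => 1) (ζ • 1 + -M) :=
    (((Commute.one_right _).smul_right ζ).add_right hJM.neg_right).smul_left δ
  have hI : Commute (ζ • 1 : Matrix ι ι ℝ) (-M) := (Commute.one_left _).smul_left ζ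
  rw [sub_eq_add_neg, add_assoc, transU_add_of_commute hJ, transU_add_of_commute hI,
    transU_smul_ones hδτ', transU_smul_one, transU_neg, neg_neg, one_mul, smul_mul_assoc, one_mul]
  congr 2
  push_cast
  ring

end transU

/-- fractional revival is preserved under complementation
`M̄ = δJ + ζI − M` when `nτ ∈ 2πℤ` and `𝟙` is an eigenvector of `M`. -/
theorem complement_transition_and_FR {n : ℕ} (hn : 0 < n)
    (M : Matrix (Fin n) (Fin n) ℝ) (hM : M.IsSymm)
    (μ : ℝ) (h1 : M *ᵥ (fun _ => (1 : ℝ)) = μ • (fun _ => (1 : ℝ)))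
    (δ ζ : ℝ) (hδ : δ = -1 ∨ δ = 1) (τ : ℝ)
    (hτ : ∃ z : ℤ, (n : ℝ) * τ = 2 * Real.pi * z) :
    transU (δ • Matrix.of (fun _ _ => (1 : ℝ)) + ζ • (1 : Matrix (Fin n) (Fin n) ℝ) - M) (-τ)
        = Complex.exp (-(Complex.I * (τ : ℂ) * (ζ : ℂ))) • transU M τ ∧
    ∀ (u v : Fin n → ℝ), u ⬝ᵥ u = 1 → v ⬝ᵥ v = 1 → LinearIndependent ℝ ![u, v] →
      ∀ (α β : ℂ), β ≠ 0 →
        (transU M τ) *ᵥ cVec u = α • cVec u + β • cVec v →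
        ∃ (α' β' : ℂ), β' ≠ 0 ∧
          (transU (δ • Matrix.of (fun _ _ => (1 : ℝ)) + ζ • (1 : Matrix (Fin n) (Fin n) ℝ) - M) (-τ))
              *ᵥ cVec u = α' • cVec u + β' • cVec v := by
  have hδτ : ∃ k : ℤ, δ * Fintype.card (Fin n) * τ = 2 * Real.pi * k := by
    obtain ⟨z, hz⟩ := hτ
    rw [Fintype.card_fin]
    rcases hδ with rfl | rfl
    · exact ⟨-z, by push_cast; linarith⟩
    · exact ⟨z, by linarith⟩
  have : Nonempty (Fin n) := Fin.pos_iff_nonempty.mp hn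
  have hU := transU_complement hM h1 hδτ ζ
  refine ⟨hU, fun u v _ _ _ α β hβ hFR => ?_⟩
  set γ := Complex.exp (-(Complex.I * τ * ζ))
  refine ⟨γ * α, γ * β, mul_ne_zero (Complex.exp_ne_zero _) hβ, ?_⟩
  rw [hU, smul_mulVec, hFR, smul_add, smul_smul, smul_smul]
end

section
/- Let M be an n×n real symmetric matrix, let u ∈ ℝ^n, and let δ, ζ ∈ ℝ. If the all-ones vector 𝟙 is orthogonal to each of the vectors u, Mu, M²u, …, M^{n−1}u (i.e., 𝟙ᵀ M^k u = 0 for 0 ≤ k ≤ n−1), then for every t ∈ ℝ, exp(it(δJ + ζI − M)) u = e^{itζ} exp(−itM) u, where J is the n×n all-ones matrix. -/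
open Matrix Filter

/-!
By Cayley–Hamilton every `M ^ k *ᵥ u` is a combination of `u, M u, …, M ^ (n - 1) u`, so the whole
Krylov space of `u` is orthogonal to `𝟙`, i.e. killed by `J`. That space is invariant under
`ζI − M`, so `δJ + ζI − M` and `ζI − M` agree on all powers applied to `u`, hence so do their
exponentials; and `ζI` is central, so `exp(it(ζI − M)) = e^{itζ} exp(−itM)`.
-/

namespace Matrix

open Polynomial

variable {ι R : Type*} [Fintype ι] [DecidableEq ι]

theorem dotProduct_aeval_mulVec_eq_zero [CommRing R] [Nontrivial R] {M : Matrix ι ι R}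
    {u w : ι → R} (h : ∀ k < Fintype.card ι, w ⬝ᵥ (M ^ k *ᵥ u) = 0) (p : R[X]) :
    w ⬝ᵥ (aeval M p *ᵥ u) = 0 := by
  cases isEmpty_or_nonempty ι
  · exact dotProduct_of_isEmpty _ _
  have hdeg : (p %ₘ M.charpoly).natDegree < Fintype.card ι := by
    have hcard := M.charpoly_natDegree_eq_dim
    refine hcard ▸ natDegree_modByMonic_lt p M.charpoly_monic fun h => ?_
    rw [h, natDegree_one] at hcard
    exact Fintype.card_ne_zero hcard.symm
  rw [aeval_eq_aeval_mod_charpoly, aeval_eq_sum_range' hdeg, sum_mulVec, dotProduct_sum]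
  refine Finset.sum_eq_zero fun k hk => ?_
  rw [smul_mulVec, dotProduct_smul, h k (Finset.mem_range.1 hk), smul_zero]

theorem add_pow_mulVec_eq_pow_mulVec [Semiring R] {A B : Matrix ι ι R} {u : ι → R}
    (h : ∀ k : ℕ, A *ᵥ (B ^ k *ᵥ u) = 0) (k : ℕ) : (A + B) ^ k *ᵥ u = B ^ k *ᵥ u := by
  induction k with
  | zero => rfl
  | succ k ih =>
    rw [pow_succ', pow_succ', ← mulVec_mulVec, ← mulVec_mulVec, ih, add_mulVec, h, zero_add]

section exp

attribute [local instance] Matrix.linftyOpNormedRing Matrix.linftyOpNormedAlgebra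

theorem exp_mulVec_eq_of_pow_mulVec_eq {𝕂 : Type*} [RCLike 𝕂] {A B : Matrix ι ι 𝕂} {v : ι → 𝕂}
    (h : ∀ k : ℕ, A ^ k *ᵥ v = B ^ k *ᵥ v) :
    NormedSpace.exp A *ᵥ v = NormedSpace.exp B *ᵥ v := by
  let L : Matrix ι ι 𝕂 →L[𝕂] ι → 𝕂 :=
    LinearMap.toContinuousLinearMap ((LinearMap.applyₗ v).comp toLin'.toLinearMap)
  have hA := L.hasSum (NormedSpace.exp_series_hasSum_exp' (𝕂 := 𝕂) A)
  have hB := L.hasSum (NormedSpace.exp_series_hasSum_exp' (𝕂 := 𝕂) B)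
  simp only [L, LinearMap.coe_toContinuousLinearMap', LinearMap.coe_comp, Function.comp_apply,
    LinearEquiv.coe_coe, LinearMap.applyₗ_apply_apply, toLin'_apply, smul_mulVec, h] at hA hB
  exact hA.unique hB

theorem exp_smul_one {𝕂 : Type*} [RCLike 𝕂] (c : 𝕂) :
    NormedSpace.exp (c • (1 : Matrix ι ι 𝕂)) = NormedSpace.exp c • 1 := by
  rw [← Algebra.algebraMap_eq_smul_one]
  exact (NormedSpace.algebraMap_exp_comm c).symm.trans (Algebra.algebraMap_eq_smul_one _)

end exp

end Matrix

section transition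

variable {ι : Type*} [Fintype ι] [DecidableEq ι]

theorem map_ofReal_pow_mulVec_cVec (A : Matrix ι ι ℝ) (k : ℕ) (u : ι → ℝ) :
    A.map Complex.ofReal ^ k *ᵥ cVec u = cVec (A ^ k *ᵥ u) :=
  funext fun i =>
    (Matrix.map_pow A Complex.ofRealHom k ▸ RingHom.map_mulVec Complex.ofRealHom (A ^ k) u i).symm

theorem transU_mulVec_eq_of_pow_mulVec_eq {A B : Matrix ι ι ℝ} {u : ι → ℝ}
    (h : ∀ k : ℕ, A ^ k *ᵥ u = B ^ k *ᵥ u) (t : ℝ) :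
    transU A t *ᵥ cVec u = transU B t *ᵥ cVec u := by
  refine Matrix.exp_mulVec_eq_of_pow_mulVec_eq fun k => ?_
  rw [_root_.smul_pow, _root_.smul_pow, smul_mulVec, smul_mulVec, map_ofReal_pow_mulVec_cVec,
    map_ofReal_pow_mulVec_cVec, h k]

theorem transU_smul_one_sub (ζ : ℝ) (M : Matrix ι ι ℝ) (t : ℝ) :
    transU (ζ • 1 - M) t = Complex.exp (Complex.I * t * ζ) • transU M (-t) := by
  have hsplit : (Complex.I * t) • (ζ • 1 - M).map Complex.ofReal
      = (Complex.I * t * ζ) • (1 : Matrix ι ι ℂ)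
        + (Complex.I * (-t : ℝ)) • M.map Complex.ofReal := by
    rw [Matrix.map_sub _ Complex.ofReal_sub, Matrix.map_smul' _ _ _ Complex.ofReal_mul,
      Matrix.map_one _ Complex.ofReal_zero Complex.ofReal_one]
    push_cast
    module
  rw [transU, transU, hsplit,
    Matrix.exp_add_of_commute _ _ (((Commute.one_left _).smul_left _).smul_right _),
    Matrix.exp_smul_one, smul_mul_assoc, one_mul, ← Complex.exp_eq_exp_ℂ]

end transition

theorem complement_transition_of_orthogonal_general {n : ℕ}
    (M : Matrix (Fin n) (Fin n) ℝ)
    (u : Fin n → ℝ) (δ ζ : ℝ)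
    (horth : ∀ k : ℕ, k ≤ n - 1 → (fun _ => (1 : ℝ)) ⬝ᵥ ((M ^ k) *ᵥ u) = 0) :
    ∀ t : ℝ,
      (transU (δ • Matrix.of (fun _ _ => (1 : ℝ)) + ζ • (1 : Matrix (Fin n) (Fin n) ℝ) - M) t)
          *ᵥ cVec u
        = Complex.exp (Complex.I * (t : ℂ) * (ζ : ℂ)) • ((transU M (-t)) *ᵥ cVec u) := by
  intro t
  have hkrylov : ∀ p : Polynomial ℝ, (fun _ => (1 : ℝ)) ⬝ᵥ (Polynomial.aeval M p *ᵥ u) = 0 :=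
    Matrix.dotProduct_aeval_mulVec_eq_zero fun k hk =>
      horth k (by rw [Fintype.card_fin] at hk; omega)
  have hpow (k : ℕ) : (δ • Matrix.of (fun _ _ => (1 : ℝ)) + ζ • 1 - M) ^ k *ᵥ u
      = (ζ • 1 - M) ^ k *ᵥ u := by
    rw [add_sub_assoc]
    refine Matrix.add_pow_mulVec_eq_pow_mulVec (fun j => ?_) k
    have hpoly : (ζ • 1 - M) ^ j = Polynomial.aeval M ((Polynomial.C ζ - Polynomial.X) ^ j) := by
      simp [Algebra.algebraMap_eq_smul_one]
    rw [smul_mulVec, hpoly]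
    exact smul_eq_zero_of_right δ (funext fun _ => hkrylov _)
  rw [transU_mulVec_eq_of_pow_mulVec_eq hpow, transU_smul_one_sub, smul_mulVec]

/-- if `𝟙ᵀ Mᵏ u = 0` for `0 ≤ k ≤ n−1`, then
`exp(it(δJ + ζI − M)) u = e^{itζ} exp(−itM) u` for all real `t`. -/
theorem complement_transition_of_orthogonal {n : ℕ}
    (M : Matrix (Fin n) (Fin n) ℝ) (hM : M.IsSymm)
    (u : Fin n → ℝ) (δ ζ : ℝ)
    (horth : ∀ k : ℕ, k ≤ n - 1 → (fun _ => (1 : ℝ)) ⬝ᵥ ((M ^ k) *ᵥ u) = 0) :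
    ∀ t : ℝ,
      (transU (δ • Matrix.of (fun _ _ => (1 : ℝ)) + ζ • (1 : Matrix (Fin n) (Fin n) ℝ) - M) t)
          *ᵥ cVec u
        = Complex.exp (Complex.I * (t : ℂ) * (ζ : ℂ)) • ((transU M (-t)) *ᵥ cVec u) :=
  complement_transition_of_orthogonal_general M u δ ζ horth
end

section
/- Let B and C be n×n real symmetric matrices, let N = [[B, C],[C, B]], let u ∈ ℝ^n be a unit vector, let τ ∈ ℝ, and let α, β ∈ ℂ with β ≠ 0. Then exp(iτN) [uᵀ 0]ᵀ = α [uᵀ 0]ᵀ + β [0 uᵀ]ᵀ if and only if exp(iτ(B+C)) u = (α+β) u and exp(iτ(B−C)) u = (α−β) u. -/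
open Matrix Filter

/-! The transform `(x, y) ↦ (x + y, x - y)` conjugates `[[B, C], [C, B]]` to the block-diagonal
matrix `diag(B + C, B - C)`, and hence its exponential to `diag(exp (B + C), exp (B - C))`.
Writing `[u; 0] = ½ [u; u] + ½ [u; -u]` gives
`exp N [u; 0] = [½ (u₊ + u₋); ½ (u₊ - u₋)]` with `u± = exp (B ± C) u`, and comparing the two
halves with `[α u; β u]` is exactly the pair of periodicity conditions. -/

open NormedSpace

theorem HasSum.matrix_fromBlocks {X R l m n o : Type*} [AddCommMonoid R] [TopologicalSpace R]
    {f : X → Matrix n l R} {g : X → Matrix n m R} {h : X → Matrix o l R} {k : X → Matrix o m R}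
    {a : Matrix n l R} {b : Matrix n m R} {c : Matrix o l R} {d : Matrix o m R}
    (hf : HasSum f a) (hg : HasSum g b) (hh : HasSum h c) (hk : HasSum k d) :
    HasSum (fun x => fromBlocks (f x) (g x) (h x) (k x)) (fromBlocks a b c d) := by
  refine Pi.hasSum.mpr fun i => Pi.hasSum.mpr fun j => ?_
  rcases i with i | i <;> rcases j with j | j
  · exact Pi.hasSum.mp (Pi.hasSum.mp hf i) j
  · exact Pi.hasSum.mp (Pi.hasSum.mp hg i) j
  · exact Pi.hasSum.mp (Pi.hasSum.mp hh i) j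
  · exact Pi.hasSum.mp (Pi.hasSum.mp hk i) j

theorem inv_two_smul_add_sub_eq_iff {K V : Type*} [Field K] [CharZero K] [AddCommGroup V]
    [Module K V] {p q a b : V} :
    ((2 : K)⁻¹ • (p + q) = a ∧ (2 : K)⁻¹ • (p - q) = b) ↔ (p = a + b ∧ q = a - b) := by
  constructor <;> rintro ⟨rfl, rfl⟩ <;> constructor <;> module

namespace Matrix

theorem fromBlocks_one_one_one_neg_one_semiconjBy {ι α : Type*} [Fintype ι] [DecidableEq ι]
    [Ring α] (B C : Matrix ι ι α) :
    SemiconjBy (fromBlocks 1 1 1 (-1)) (fromBlocks (B + C) 0 0 (B - C)) (fromBlocks B C C B) := by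
  simp only [SemiconjBy, fromBlocks_multiply]
  congr 1 <;> noncomm_ring

section Exp

variable {m n 𝔸 : Type*} [Fintype m] [DecidableEq m] [Fintype n] [DecidableEq n]
  [NormedRing 𝔸] [NormedAlgebra ℚ 𝔸] [CompleteSpace 𝔸]

/- Under the operator norm the uniformity of `Matrix m m 𝔸` agrees with the product one only up
to unfolding, so instance search misses completeness and it is passed by hand. -/

theorem hasSum_exp_series (M : Matrix m m 𝔸) :
    HasSum (fun k => (k.factorial : ℚ)⁻¹ • M ^ k) (exp M) := by
  open scoped Norms.Operator in
  exact @exp_series_hasSum_exp' ℚ _ _ _ _ _ _ (inferInstanceAs (CompleteSpace (m → m → 𝔸))) M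

theorem semiconjBy_exp_right {P A B : Matrix m m 𝔸} (h : SemiconjBy P A B) :
    SemiconjBy P (exp A) (exp B) := by
  open scoped Norms.Operator in
  exact @SemiconjBy.exp_right _ _ _ (inferInstanceAs (CompleteSpace (m → m → 𝔸))) _ _ _ h

theorem exp_fromBlocks_zero (A : Matrix m m 𝔸) (D : Matrix n n 𝔸) :
    exp (fromBlocks A 0 0 D) = fromBlocks (exp A) 0 0 (exp D) := by
  refine (hasSum_exp_series _).unique ?_
  simpa only [fromBlocks_diagonal_pow, fromBlocks_smul, smul_zero] using
    (hasSum_exp_series A).matrix_fromBlocks hasSum_zero hasSum_zero (hasSum_exp_series D)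

end Exp

theorem exp_fromBlocks_mulVec_inl {ι 𝕂 : Type*} [Fintype ι] [DecidableEq ι] [RCLike 𝕂]
    (B C : Matrix ι ι 𝕂) (v : ι → 𝕂) :
    exp (fromBlocks B C C B) *ᵥ Sum.elim v 0 =
      Sum.elim ((2 : 𝕂)⁻¹ • (exp (B + C) *ᵥ v + exp (B - C) *ᵥ v))
        ((2 : 𝕂)⁻¹ • (exp (B + C) *ᵥ v - exp (B - C) *ᵥ v)) := by
  set P : Matrix (ι ⊕ ι) (ι ⊕ ι) 𝕂 := fromBlocks 1 1 1 (-1)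
  have hv : Sum.elim v 0 = P *ᵥ Sum.elim ((2 : 𝕂)⁻¹ • v) ((2 : 𝕂)⁻¹ • v) := by
    simp only [P, fromBlocks_mulVec, Sum.elim_comp_inl, Sum.elim_comp_inr, one_mulVec, neg_mulVec]
    congr 1 <;> module
  have hexp : exp (fromBlocks B C C B) * P = P * fromBlocks (exp (B + C)) 0 0 (exp (B - C)) := by
    rw [← exp_fromBlocks_zero]
    exact (semiconjBy_exp_right (fromBlocks_one_one_one_neg_one_semiconjBy B C)).symm
  rw [hv, mulVec_mulVec, hexp, ← mulVec_mulVec, fromBlocks_mulVec, fromBlocks_mulVec]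
  simp only [Sum.elim_comp_inl, Sum.elim_comp_inr, one_mulVec, neg_mulVec, zero_mulVec,
    mulVec_smul]
  congr 1 <;> module

end Matrix

theorem double_cover_FR_across_general {n : ℕ}
    (B C : Matrix (Fin n) (Fin n) ℝ) (u : Fin n → ℝ) (τ : ℝ) (α β : ℂ) :
    (transU (Matrix.fromBlocks B C C B) τ) *ᵥ Sum.elim (cVec u) (0 : Fin n → ℂ)
        = α • Sum.elim (cVec u) (0 : Fin n → ℂ) + β • Sum.elim (0 : Fin n → ℂ) (cVec u)
      ↔ ((transU (B + C) τ) *ᵥ cVec u = (α + β) • cVec u ∧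
         (transU (B - C) τ) *ᵥ cVec u = (α - β) • cVec u) := by
  simp only [transU, fromBlocks_map, Matrix.map_add _ Complex.ofReal_add,
    Matrix.map_sub _ Complex.ofReal_sub, fromBlocks_smul, smul_add, smul_sub]
  have hrhs : α • Sum.elim (cVec u) (0 : Fin n → ℂ) + β • Sum.elim (0 : Fin n → ℂ) (cVec u)
      = Sum.elim (α • cVec u) (β • cVec u) := by
    ext (i | i) <;> simp
  rw [exp_fromBlocks_mulVec_inl, hrhs, Sum.elim_eq_iff, inv_two_smul_add_sub_eq_iff, add_smul,
    sub_smul]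

/-- `(α,β)`-fractional revival from `[uᵀ 0]ᵀ` to `[0 uᵀ]ᵀ` in the double cover
iff `u` is periodic for `B+C` and `B−C` with phases `α+β` and `α−β`. -/
theorem double_cover_FR_across {n : ℕ}
    (B C : Matrix (Fin n) (Fin n) ℝ) (hB : B.IsSymm) (hC : C.IsSymm)
    (u : Fin n → ℝ) (hu : u ⬝ᵥ u = 1) (τ : ℝ) (α β : ℂ) (hβ : β ≠ 0) :
    (transU (Matrix.fromBlocks B C C B) τ) *ᵥ Sum.elim (cVec u) (0 : Fin n → ℂ)
        = α • Sum.elim (cVec u) (0 : Fin n → ℂ) + β • Sum.elim (0 : Fin n → ℂ) (cVec u)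
      ↔ ((transU (B + C) τ) *ᵥ cVec u = (α + β) • cVec u ∧
         (transU (B - C) τ) *ᵥ cVec u = (α - β) • cVec u) :=
  double_cover_FR_across_general B C u τ α β
end

section
/- Let B and C be n×n real symmetric matrices, let N = [[B, C],[C, B]], let u, v ∈ ℝ^n be linearly independent unit vectors, let τ ∈ ℝ, and let α, β ∈ ℂ with β ≠ 0. Then: (a) exp(iτ(B+C)) u = α u + β v if and only if exp(iτN) (1/√2)[uᵀ uᵀ]ᵀ = α (1/√2)[uᵀ uᵀ]ᵀ + β (1/√2)[vᵀ vᵀ]ᵀ; and (b) exp(iτ(B−C)) u = α u + β v if and only if exp(iτN) (1/√2)[uᵀ −uᵀ]ᵀ = α (1/√2)[uᵀ −uᵀ]ᵀ + β (1/√2)[vᵀ −vᵀ]ᵀ. -/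
open Matrix Filter

/-! If `A P = P K` then `A ^ k P = P K ^ k` for all `k`, hence `exp A P = P exp K` termwise in the
exponential series. For `ε = ±1` the matrix `P = [I; εI]` intertwines `N = [[B, C], [C, B]]`
with `B + εC`, so `exp(iτN) [x; εx] = [y; εy]` with `y = exp(iτ(B + εC)) x`. As `x ↦ [x; εx] / √2`
is linear and injective, a revival equation for `B + εC` holds exactly when its lift holds for `N`. -/

namespace Matrix

theorem mulVec_eq_smul_add_smul_iff_of_mul_eq {m n 𝕜 : Type*} [Fintype m] [Fintype n]
    [Field 𝕜] {U : Matrix m m 𝕜} {V : Matrix n n 𝕜} {P : Matrix m n 𝕜} (h : U * P = P * V)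
    (hP : Function.Injective P.mulVec) {s : 𝕜} (hs : s ≠ 0) (α β : 𝕜) (x y : n → 𝕜) :
    V *ᵥ x = α • x + β • y ↔
      U *ᵥ (s • P *ᵥ x) = α • (s • P *ᵥ x) + β • (s • P *ᵥ y) := by
  have lhs : U *ᵥ (s • P *ᵥ x) = s • P *ᵥ (V *ᵥ x) := by
    rw [mulVec_smul, mulVec_mulVec, h, ← mulVec_mulVec]
  have rhs : α • (s • P *ᵥ x) + β • (s • P *ᵥ y) = s • P *ᵥ (α • x + β • y) := by
    rw [mulVec_add, mulVec_smul, mulVec_smul, smul_add, smul_comm α, smul_comm β]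
  rw [lhs, rhs, (smul_right_injective _ hs).eq_iff, hP.eq_iff]

variable {m n : Type*} [Fintype m] [DecidableEq m] [Fintype n] [DecidableEq n]

theorem pow_mul_of_mul_eq {R : Type*} [Semiring R] {A : Matrix m m R} {K : Matrix n n R}
    {P : Matrix m n R} (h : A * P = P * K) (k : ℕ) : A ^ k * P = P * K ^ k := by
  induction k with
  | zero => simp
  | succ k ih =>
    rw [pow_succ', Matrix.mul_assoc, ih, ← Matrix.mul_assoc, h, Matrix.mul_assoc, ← pow_succ']

theorem exp_mul_of_mul_eq {𝕂 : Type*} [RCLike 𝕂] {A : Matrix m m 𝕂} {K : Matrix n n 𝕂}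
    {P : Matrix m n 𝕂} (h : A * P = P * K) : NormedSpace.exp A * P = P * NormedSpace.exp K := by
  open scoped Norms.Operator in
  have hA := (NormedSpace.exp_series_hasSum_exp' (𝕂 := 𝕂) A).map (mulRightLinearMap m 𝕂 P)
    (continuous_id.matrix_mul continuous_const)
  have hK := (NormedSpace.exp_series_hasSum_exp' (𝕂 := 𝕂) K).map (mulLeftLinearMap n 𝕂 P)
    (continuous_const.matrix_mul continuous_id)
  refine hA.unique (hK.congr_fun fun k => ?_)
  simp [pow_mul_of_mul_eq h]

end Matrix

section DoubleCover

variable {n R : Type*} [DecidableEq n] [CommRing R]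

variable (n) in
def doubleCoverLift (ε : R) : Matrix (n ⊕ n) n R := fromRows 1 (ε • 1)

variable [Fintype n]

theorem doubleCoverLift_mulVec (ε : R) (x : n → R) :
    doubleCoverLift n ε *ᵥ x = Sum.elim x (ε • x) := by
  rw [doubleCoverLift, fromRows_mulVec, one_mulVec, smul_mulVec, one_mulVec]

theorem doubleCoverLift_mulVec_injective (ε : R) :
    Function.Injective (doubleCoverLift n ε).mulVec := fun x y hxy ↦ by
  simp only [doubleCoverLift_mulVec] at hxy
  exact funext fun i ↦ congrFun hxy (Sum.inl i)

theorem fromBlocks_mul_doubleCoverLift (B C : Matrix n n R) {ε : R} (hε : ε * ε = 1) :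
    fromBlocks B C C B * doubleCoverLift n ε = doubleCoverLift n ε * (B + ε • C) := by
  rw [doubleCoverLift, fromBlocks_mul_fromRows, fromRows_mul]
  simp only [Matrix.mul_one, Matrix.mul_smul, Matrix.smul_mul, Matrix.one_mul, smul_add, smul_smul,
    hε, one_smul, add_comm C]

theorem transU_fromBlocks_mul_doubleCoverLift (B C : Matrix n n ℝ) {ε : ℝ} (hε : ε * ε = 1)
    (t : ℝ) :
    transU (fromBlocks B C C B) t * doubleCoverLift n (ε : ℂ) =
      doubleCoverLift n (ε : ℂ) * transU (B + ε • C) t := by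
  refine exp_mul_of_mul_eq ?_
  rw [fromBlocks_map, fromBlocks_smul, fromBlocks_mul_doubleCoverLift _ _ (by exact_mod_cast hε)]
  congr 1
  ext i j
  simp only [Matrix.add_apply, Matrix.smul_apply, map_apply, smul_eq_mul, Complex.coe_smul,
    Complex.real_smul, Complex.ofReal_add, Complex.ofReal_mul]
  ring

theorem transU_revival_iff_fromBlocks (B C : Matrix n n ℝ) {ε : ℝ} (hε : ε * ε = 1) (t : ℝ)
    (α β : ℂ) (x y : n → ℂ) {s : ℂ} (hs : s ≠ 0) :
    transU (B + ε • C) t *ᵥ x = α • x + β • y ↔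
      transU (fromBlocks B C C B) t *ᵥ (s • Sum.elim x ((ε : ℂ) • x)) =
        α • (s • Sum.elim x ((ε : ℂ) • x)) + β • (s • Sum.elim y ((ε : ℂ) • y)) := by
  simp only [← doubleCoverLift_mulVec]
  exact mulVec_eq_smul_add_smul_iff_of_mul_eq (transU_fromBlocks_mul_doubleCoverLift B C hε t)
    (doubleCoverLift_mulVec_injective _) hs α β x y

end DoubleCover

theorem double_cover_FR_lift_general {n : ℕ}
    (B C : Matrix (Fin n) (Fin n) ℝ)
    (u v : Fin n → ℝ) (τ : ℝ) (α β : ℂ) :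
    ((transU (B + C) τ) *ᵥ cVec u = α • cVec u + β • cVec v ↔
      (transU (Matrix.fromBlocks B C C B) τ) *ᵥ
          (((Real.sqrt 2 : ℂ))⁻¹ • Sum.elim (cVec u) (cVec u))
        = α • (((Real.sqrt 2 : ℂ))⁻¹ • Sum.elim (cVec u) (cVec u))
          + β • (((Real.sqrt 2 : ℂ))⁻¹ • Sum.elim (cVec v) (cVec v))) ∧
    ((transU (B - C) τ) *ᵥ cVec u = α • cVec u + β • cVec v ↔
      (transU (Matrix.fromBlocks B C C B) τ) *ᵥ
          (((Real.sqrt 2 : ℂ))⁻¹ • Sum.elim (cVec u) (-(cVec u)))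
        = α • (((Real.sqrt 2 : ℂ))⁻¹ • Sum.elim (cVec u) (-(cVec u)))
          + β • (((Real.sqrt 2 : ℂ))⁻¹ • Sum.elim (cVec v) (-(cVec v)))) := by
  have hs : ((Real.sqrt 2 : ℂ))⁻¹ ≠ 0 := by simp
  have revival (ε : ℝ) (hε : ε * ε = 1) :=
    transU_revival_iff_fromBlocks B C hε τ α β (cVec u) (cVec v) hs
  constructor
  · simpa using revival 1 (one_mul 1)
  · simpa [sub_eq_add_neg] using revival (-1) (by norm_num)

/-- fractional revival in `B ± C` corresponds to fractional revival in the
double cover `[[B, C], [C, B]]` from the symmetric/antisymmetric lifts of the states. -/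
theorem double_cover_FR_lift {n : ℕ}
    (B C : Matrix (Fin n) (Fin n) ℝ) (hB : B.IsSymm) (hC : C.IsSymm)
    (u v : Fin n → ℝ) (hu : u ⬝ᵥ u = 1) (hv : v ⬝ᵥ v = 1)
    (hli : LinearIndependent ℝ ![u, v]) (τ : ℝ) (α β : ℂ) (hβ : β ≠ 0) :
    ((transU (B + C) τ) *ᵥ cVec u = α • cVec u + β • cVec v ↔
      (transU (Matrix.fromBlocks B C C B) τ) *ᵥ
          (((Real.sqrt 2 : ℂ))⁻¹ • Sum.elim (cVec u) (cVec u))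
        = α • (((Real.sqrt 2 : ℂ))⁻¹ • Sum.elim (cVec u) (cVec u))
          + β • (((Real.sqrt 2 : ℂ))⁻¹ • Sum.elim (cVec v) (cVec v))) ∧
    ((transU (B - C) τ) *ᵥ cVec u = α • cVec u + β • cVec v ↔
      (transU (Matrix.fromBlocks B C C B) τ) *ᵥ
          (((Real.sqrt 2 : ℂ))⁻¹ • Sum.elim (cVec u) (-(cVec u)))
        = α • (((Real.sqrt 2 : ℂ))⁻¹ • Sum.elim (cVec u) (-(cVec u)))
          + β • (((Real.sqrt 2 : ℂ))⁻¹ • Sum.elim (cVec v) (-(cVec v)))) :=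
  double_cover_FR_lift_general B C u v τ α β
end

section
/- Let n be an odd positive integer and let S ⊆ (ℤ/nℤ) \ {0} satisfy S = −S. Then the circulant graph Cay(ℤ/nℤ, S) admits no pretty good plus state transfer with respect to its adjacency matrix A: there do not exist vertices a ≠ b and c ≠ d with e_a + e_b ≠ e_c + e_d, a sequence of real numbers t_k, and γ ∈ ℂ with |γ| = 1, such that exp(i t_k A)(e_a + e_b)/√2 → γ (e_c + e_d)/√2 as k → ∞. -/
open Matrix Filter

/-!
A permutation `σ` of the vertices preserving `A` gives a permutation matrix `P` commuting with `A`,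
hence with the unitary `U(t) = exp(itA)`. So `⟨U(t)u, P U(t)u⟩ = ⟨u, P u⟩` for all `t`, and in the
limit (`|γ| = 1`) pretty good state transfer from `u` to `v` forces `⟨u, P u⟩ = ⟨v, P v⟩`. For plus
states this overlap counts the pairs `(x, y) ∈ {a, b}²` with `σ x = y`.

Since `S = -S`, every reflection `x ↦ s - x` is an automorphism of the circulant, and for odd `n`
doubling is injective on `ℤ/nℤ`. The reflection in `a + b` swaps `a` and `b`; comparing overlaps
forces `c + d = a + b`. The reflection in `2a` fixes `a` and moves `b`, which then forces
`{c, d} = {a, b}`.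
-/

section Invariants

variable {ι : Type*} [Fintype ι] [DecidableEq ι]

lemma transU_conjTranspose_mul_self {M : Matrix ι ι ℝ} (hM : M.IsSymm) (t : ℝ) :
    (transU M t)ᴴ * transU M t = 1 := by
  set X := (Complex.I * (t : ℂ)) • M.map Complex.ofReal
  have hX : Xᴴ = -X := by
    ext i j
    simp [X, hM.apply]
  rw [transU, ← Matrix.exp_conjTranspose, hX,
    ← Matrix.exp_add_of_commute _ _ ((Commute.refl X).neg_left), neg_add_cancel,
    NormedSpace.exp_zero]

lemma commute_transU {M : Matrix ι ι ℝ} {Q : Matrix ι ι ℂ}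
    (hQ : Commute Q (M.map Complex.ofReal)) (t : ℝ) : Commute Q (transU M t) :=
  (hQ.smul_right _).exp_right

lemma PGST.star_dotProduct_mulVec_eq {M : Matrix ι ι ℝ} {u v : ι → ℂ} (h : PGST M u v)
    (hM : M.IsSymm) {Q : Matrix ι ι ℂ} (hQ : Commute Q (M.map Complex.ofReal)) :
    star u ⬝ᵥ Q *ᵥ u = star v ⬝ᵥ Q *ᵥ v := by
  obtain ⟨t, γ, hγ, hlim⟩ := h
  have hconst (s : ℝ) : star (transU M s *ᵥ u) ⬝ᵥ Q *ᵥ (transU M s *ᵥ u) = star u ⬝ᵥ Q *ᵥ u := by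
    rw [star_mulVec, mulVec_mulVec, ← dotProduct_mulVec, mulVec_mulVec, (commute_transU hQ s).eq,
      ← mul_assoc, transU_conjTranspose_mul_self hM, one_mul]
  have hform : Continuous fun w : ι → ℂ => star w ⬝ᵥ Q *ᵥ w :=
    continuous_star.dotProduct (continuous_const.matrix_mulVec continuous_id)
  have hlim' := (hform.tendsto _).comp hlim
  simp only [Function.comp_def, hconst] at hlim'
  rw [tendsto_nhds_unique tendsto_const_nhds hlim', star_smul, mulVec_smul, smul_dotProduct,
    dotProduct_smul, smul_smul, RCLike.star_def, Complex.conj_mul', hγ]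
  simp

lemma commute_permMatrix {R : Type*} [NonAssocSemiring R] {M : Matrix ι ι R}
    {σ : Equiv.Perm ι} (hσ : ∀ i j, M (σ i) (σ j) = M i j) : Commute (σ.permMatrix R) M := by
  rw [Commute, SemiconjBy, Equiv.Perm.permMatrix, PEquiv.toMatrix_toPEquiv_mul,
    PEquiv.mul_toMatrix_toPEquiv]
  ext i j
  simpa using hσ i (σ.symm j)

def plusOverlap (σ : Equiv.Perm ι) (a b : ι) : ℕ :=
  (if σ a = a then 1 else 0) + (if σ a = b then 1 else 0) +
    (if σ b = a then 1 else 0) + (if σ b = b then 1 else 0)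

lemma eVec_dotProduct (a : ι) (v : ι → ℂ) : eVec a ⬝ᵥ v = v a := by
  simp [eVec, dotProduct]

lemma star_plusState_dotProduct_permMatrix_mulVec (σ : Equiv.Perm ι) (a b : ι) :
    star (plusState a b) ⬝ᵥ σ.permMatrix ℂ *ᵥ plusState a b = plusOverlap σ a b / 2 := by
  have hstar : star (eVec a + eVec b : ι → ℂ) = eVec a + eVec b := by
    ext j
    simp only [Pi.star_apply, Pi.add_apply, eVec]
    split_ifs <;> simp
  have hnorm : star ((√2 : ℂ)⁻¹) * (√2 : ℂ)⁻¹ = 1 / 2 := by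
    rw [star_inv₀, Complex.star_def, Complex.conj_ofReal, ← mul_inv, ← Complex.ofReal_mul,
      Real.mul_self_sqrt zero_le_two]
    norm_num
  rw [permMatrix_mulVec, plusState, star_smul, hstar, smul_dotProduct, add_dotProduct,
    eVec_dotProduct, eVec_dotProduct]
  simp only [Function.comp_apply, Pi.smul_apply, Pi.add_apply, smul_eq_mul, ← mul_add,
    ← mul_assoc, hnorm]
  simp only [eVec, plusOverlap]
  push_cast
  ring

lemma PGST.plusOverlap_eq {M : Matrix ι ι ℝ} (hM : M.IsSymm) {σ : Equiv.Perm ι}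
    (hσ : ∀ i j, M (σ i) (σ j) = M i j) {a b c d : ι}
    (h : PGST M (plusState a b) (plusState c d)) : plusOverlap σ a b = plusOverlap σ c d := by
  have := h.star_dotProduct_mulVec_eq hM (commute_permMatrix (M := M.map Complex.ofReal) (σ := σ)
    (by simp [hσ]))
  rw [star_plusState_dotProduct_permMatrix_mulVec, star_plusState_dotProduct_permMatrix_mulVec,
    div_left_inj' two_ne_zero] at this
  exact_mod_cast this

end Invariants

section Reflections

variable {G : Type*} [AddCommGroup G] [DecidableEq G]

lemma plusOverlap_subLeft (s a b : G) :
    plusOverlap (Equiv.subLeft s) a b =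
      (if a + a = s then 1 else 0) + 2 * (if a + b = s then 1 else 0) +
        (if b + b = s then 1 else 0) := by
  simp only [plusOverlap, Equiv.subLeft_apply, sub_eq_iff_eq_add, eq_comm (a := s), add_comm b a]
  split_ifs <;> rfl

variable {a b c d : G}

lemma add_eq_add_of_plusOverlap_subLeft_eq (h2 : Function.Injective fun x : G => x + x)
    (hab : a ≠ b) (hcd : c ≠ d)
    (h : plusOverlap (Equiv.subLeft (a + b)) a b = plusOverlap (Equiv.subLeft (a + b)) c d) :
    c + d = a + b := by
  by_contra hsum
  rw [plusOverlap_subLeft, plusOverlap_subLeft] at h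
  simp only [add_right_inj, add_left_inj, hab, hab.symm, hsum, ↓reduceIte, mul_one, mul_zero,
    zero_add, add_zero] at h
  split_ifs at h with hc hd <;> try omega
  exact hcd (h2 (hc.trans hd.symm))

lemma eq_or_eq_of_plusOverlap_subLeft_eq (h2 : Function.Injective fun x : G => x + x)
    (hab : a ≠ b) (hsum : c + d = a + b)
    (h : plusOverlap (Equiv.subLeft (a + a)) a b = plusOverlap (Equiv.subLeft (a + a)) c d) :
    c = a ∧ d = b ∨ c = b ∧ d = a := by
  rw [plusOverlap_subLeft, plusOverlap_subLeft, hsum] at h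
  simp only [add_right_inj, h2.eq_iff, hab.symm, ↓reduceIte, mul_zero, add_zero] at h
  split_ifs at h with hc hd hd <;> try omega
  · subst hc
    exact .inl ⟨rfl, add_left_cancel hsum⟩
  · subst hd
    exact .inr ⟨add_right_cancel (hsum.trans (add_comm _ _)), rfl⟩

end Reflections

section Circulant

variable {n : ℕ} {S : Finset (ZMod n)}

lemma cayA_sub_left (hS : ∀ s ∈ S, -s ∈ S) (s i j : ZMod n) :
    cayA n S (s - i) (s - j) = cayA n S i j := by
  have hmem : j - i ∈ S ↔ i - j ∈ S :=
    ⟨fun h => by simpa using hS _ h, fun h => by simpa using hS _ h⟩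
  simp [cayA, hmem]

lemma cayA_isSymm (hS : ∀ s ∈ S, -s ∈ S) : (cayA n S).IsSymm := by
  ext i j
  simpa using cayA_sub_left hS (i + j) i j

end Circulant

lemma ZMod.add_self_injective {n : ℕ} (hodd : Odd n) :
    Function.Injective fun x : ZMod n => x + x := by
  intro x y h
  rw [← sub_eq_zero, ← ZMod.add_self_eq_zero_iff_eq_zero hodd]
  linear_combination h

theorem no_plus_pgst_odd_circulant_general (n : ℕ) [NeZero n] (hodd : Odd n)
    (S : Finset (ZMod n)) (hS : ∀ s ∈ S, -s ∈ S) :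
    ¬ ∃ a b c d : ZMod n, a ≠ b ∧ c ≠ d ∧ eVec a + eVec b ≠ eVec c + eVec d ∧
        PGST (cayA n S) (plusState a b) (plusState c d) := by
  rintro ⟨a, b, c, d, hab, hcd, hne, h⟩
  have hoverlap (s : ZMod n) :=
    h.plusOverlap_eq (σ := Equiv.subLeft s) (cayA_isSymm hS) (cayA_sub_left hS s)
  have h2 := ZMod.add_self_injective hodd
  have hsum := add_eq_add_of_plusOverlap_subLeft_eq h2 hab hcd (hoverlap (a + b))
  rcases eq_or_eq_of_plusOverlap_subLeft_eq h2 hab hsum (hoverlap (a + a)) with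
    ⟨rfl, rfl⟩ | ⟨rfl, rfl⟩
  · exact hne rfl
  · exact hne (add_comm _ _)

/-- a circulant graph of odd order admits no pretty good plus state transfer. -/
theorem no_plus_pgst_odd_circulant (n : ℕ) [NeZero n] (hodd : Odd n)
    (S : Finset (ZMod n)) (h0 : (0 : ZMod n) ∉ S) (hS : ∀ s ∈ S, -s ∈ S) :
    ¬ ∃ a b c d : ZMod n, a ≠ b ∧ c ≠ d ∧ eVec a + eVec b ≠ eVec c + eVec d ∧
        PGST (cayA n S) (plusState a b) (plusState c d) :=
  no_plus_pgst_odd_circulant_general n hodd S hS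
end
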